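/- Let a(1), …, a(n+m) ∈ ℤ^ν and fix c ∈ (ℂˣ)^m such that there exists t₀ ∈ (ℂˣ)^ν with c_j = t₀^{a(n+j)} for all j. Then the fiber S_c := {x ∈ (ℂˣ)^n : ∃ t ∈ (ℂˣ)^ν with x_i = t^{a(i)} for i = 1,…,n and c_j = t^{a(n+j)} for j = 1,…,m} is the solution set of finitely many binomial equations with nonzero constants: there exist r ∈ ℕ, vectors γ(1), …, γ(r) ∈ ℤ^n, and constants d_1, …, d_r ∈ ℂˣ such that S_c = {x ∈ (ℂˣ)^n : ∏_{j=1}^n x_j^{γ_j(i)} = d_i for all i = 1, …, r}. -/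

import Mathlib

/-!
For a divisible abelian group `G` such as `ℂˣ`, a point `y ∈ G^ι` lies in the image of the
monomial map `t ↦ (∏ l, t l ^ a i l)ᵢ` exactly when its character `γ ↦ ∏ i, y i ^ γ i` kills the
lattice `L = {γ : ∑ i, γ i • a i = 0}`: such a character factors through `ℤ^ι ⧸ L ↪ ℤ^κ`, and
since a divisible group is an injective `ℤ`-module it extends to a character of `ℤ^κ`, that is,
to a point `t`. As `L` is finitely generated, finitely many binomials `∏ i, y i ^ γ i = 1`
cut out the image. Fixing the last `m` coordinates to `c` turns them into binomial equations in
`x` with constants `(∏ j, c j ^ γ (n + j))⁻¹`.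
-/

open Function

noncomputable instance Units.rootableByNatOfIsAlgClosed {K : Type*} [Field K] [IsAlgClosed K] :
    RootableBy Kˣ ℕ :=
  rootableByOfPowLeftSurj _ _ fun {n} hn u => by
    obtain ⟨z, hz⟩ := IsAlgClosed.exists_pow_nat_eq (u : K) (Nat.pos_of_ne_zero hn)
    have hz0 : z ≠ 0 := by
      rintro rfl
      exact u.ne_zero (by simpa [hn] using hz.symm)
    exact ⟨Units.mk0 z hz0, Units.ext hz⟩

noncomputable instance Units.rootableByIntOfIsAlgClosed {K : Type*} [Field K] [IsAlgClosed K] :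
    RootableBy Kˣ ℤ :=
  Group.rootableByIntOfRootableByNat _

instance Additive.divisibleByInt {G : Type*} [CommGroup G] [RootableBy G ℤ] :
    DivisibleBy (Additive G) ℤ where
  div a n := Additive.ofMul (RootableBy.root a.toMul n)
  div_zero a := by simp [RootableBy.root_zero]
  div_cancel a hn := by
    apply Additive.toMul.injective
    simp [toMul_zsmul, RootableBy.root_cancel _ hn]

theorem Module.Baer.exists_comp_eq_of_ker_le {R M N Q : Type*} [Ring R] [AddCommGroup M]
    [Module R M] [AddCommGroup N] [Module R N] [AddCommGroup Q] [Module R Q]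
    (hQ : Module.Baer R Q) (f : M →ₗ[R] N) (g : M →ₗ[R] Q)
    (hfg : LinearMap.ker f ≤ LinearMap.ker g) : ∃ h : N →ₗ[R] Q, h ∘ₗ f = g := by
  have hinj : Function.Injective ((LinearMap.ker f).liftQ f le_rfl) := by
    rw [← LinearMap.ker_eq_bot, Submodule.ker_liftQ_eq_bot _ _ _ le_rfl]
  obtain ⟨h, hh⟩ := hQ.extension_property _ hinj ((LinearMap.ker f).liftQ g hfg)
  refine ⟨h, LinearMap.ext fun x => ?_⟩
  simpa using LinearMap.congr_fun hh ((LinearMap.ker f).mkQ x)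

section MonomialMap

variable {G : Type*} [CommGroup G] {ι κ : Type*} [Fintype ι] [Fintype κ]

/-- Valued in `Additive G` so that the theory of injective `ℤ`-modules applies. -/
def zpowCharacter (y : ι → G) : (ι → ℤ) →ₗ[ℤ] Additive G :=
  Fintype.linearCombination ℤ fun i => Additive.ofMul (y i)

theorem toMul_zpowCharacter (y : ι → G) (γ : ι → ℤ) :
    (zpowCharacter y γ).toMul = ∏ i, y i ^ γ i := by
  simp [zpowCharacter, Fintype.linearCombination_apply, toMul_sum, toMul_zsmul]

theorem zpowCharacter_single [DecidableEq ι] (y : ι → G) (i : ι) :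
    zpowCharacter y (Pi.single i 1) = Additive.ofMul (y i) := by
  simp [zpowCharacter]

theorem zpowCharacter_injective : Injective (zpowCharacter : (ι → G) → _) := by
  classical
  intro y y' h
  funext i
  simpa [zpowCharacter_single] using LinearMap.congr_fun h (Pi.single i 1)

theorem zpowCharacter_surjective : Surjective (zpowCharacter : (κ → G) → _) := by
  classical
  intro h
  refine ⟨fun l => (h (Pi.single l 1)).toMul, ?_⟩
  ext l
  simp [zpowCharacter_single]

theorem zpowCharacter_monomial (a : ι → κ → ℤ) (t : κ → G) :
    zpowCharacter (fun i => ∏ l, t l ^ a i l) =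
      zpowCharacter t ∘ₗ Fintype.linearCombination ℤ a := by
  classical
  ext i
  apply Additive.toMul.injective
  simp [zpowCharacter_single, toMul_zpowCharacter]

theorem exists_monomial_eq_iff_ker_le [RootableBy G ℤ] (a : ι → κ → ℤ) (y : ι → G) :
    (∃ t : κ → G, ∀ i, y i = ∏ l, t l ^ a i l) ↔
      LinearMap.ker (Fintype.linearCombination ℤ a) ≤ LinearMap.ker (zpowCharacter y) := by
  constructor
  · rintro ⟨t, ht⟩
    rw [funext ht, zpowCharacter_monomial]
    exact LinearMap.ker_le_ker_comp _ _
  · intro hker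
    obtain ⟨h, hh⟩ := (Module.Baer.of_divisible (Additive G)).exists_comp_eq_of_ker_le _ _ hker
    obtain ⟨t, rfl⟩ := zpowCharacter_surjective h
    refine ⟨t, congrFun (zpowCharacter_injective ?_)⟩
    rw [zpowCharacter_monomial, hh]

theorem exists_binomial_equations_of_monomial_image [RootableBy G ℤ] (a : ι → κ → ℤ) :
    ∃ (r : ℕ) (Γ : Fin r → ι → ℤ), ∀ y : ι → G,
      (∃ t : κ → G, ∀ i, y i = ∏ l, t l ^ a i l) ↔ ∀ k, ∏ i, y i ^ Γ k i = 1 := by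
  obtain ⟨r, Γ, hΓ⟩ := Submodule.fg_iff_exists_fin_generating_family.mp
    (IsNoetherian.noetherian (LinearMap.ker (Fintype.linearCombination ℤ a)))
  refine ⟨r, Γ, fun y => ?_⟩
  rw [exists_monomial_eq_iff_ker_le, ← hΓ, Submodule.span_le, Set.range_subset_iff]
  simp only [SetLike.mem_coe, LinearMap.mem_ker, ← toMul_zpowCharacter, toMul_eq_one]

end MonomialMap

theorem stmt11_general (ν n m : ℕ) (a : Fin (n + m) → Fin ν → ℤ) (c : Fin m → ℂˣ) :
    ∃ (r : ℕ) (γ : Fin r → Fin n → ℤ) (d : Fin r → ℂˣ),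
      {x : Fin n → ℂˣ | ∃ t : Fin ν → ℂˣ,
          (∀ i, x i = ∏ l, t l ^ a (Fin.castAdd m i) l) ∧
          (∀ j, c j = ∏ l, t l ^ a (Fin.natAdd n j) l)} =
        {x : Fin n → ℂˣ | ∀ i, ∏ j, x j ^ γ i j = d i} := by
  obtain ⟨r, Γ, hΓ⟩ := exists_binomial_equations_of_monomial_image (G := ℂˣ) a
  refine ⟨r, fun k j => Γ k (Fin.castAdd m j), fun k => (∏ j, c j ^ Γ k (Fin.natAdd n j))⁻¹, ?_⟩
  ext x
  simpa only [Set.mem_ofPred_eq, Fin.forall_fin_add, Fin.append_left, Fin.append_right,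
    Fin.prod_univ_add, mul_eq_one_iff_eq_inv] using hΓ (Fin.append x c)

/-- Let `a 1, …, a (n+m) ∈ ℤ^ν` and fix `c ∈ (ℂˣ)^m` lying in the image
of the parameter monomial map.  Then the fiber
`S_c = {x ∈ (ℂˣ)^n : ∃ t, x i = t ^ a i and c j = t ^ a (n+j)}` is the solution set of
finitely many binomial equations with nonzero constants: there are `r`, exponent vectors
`γ i ∈ ℤ^n` and constants `d i ∈ ℂˣ` with `S_c = {x : ∏ j, x j ^ γ i j = d i for all i}`. -/
theorem stmt11 (ν n m : ℕ) (a : Fin (n + m) → Fin ν → ℤ) (c : Fin m → ℂˣ)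
    (hc : ∃ t₀ : Fin ν → ℂˣ, ∀ j, c j = ∏ l, t₀ l ^ a (Fin.natAdd n j) l) :
    ∃ (r : ℕ) (γ : Fin r → Fin n → ℤ) (d : Fin r → ℂˣ),
      {x : Fin n → ℂˣ | ∃ t : Fin ν → ℂˣ,
          (∀ i, x i = ∏ l, t l ^ a (Fin.castAdd m i) l) ∧
          (∀ j, c j = ∏ l, t l ^ a (Fin.natAdd n j) l)} =
        {x : Fin n → ℂˣ | ∀ i, ∏ j, x j ^ γ i j = d i} :=
  stmt11_general ν n m a c
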